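/- Let R ⊆ ℤ \ {0} be a finite set, let d ≥ 2, and let R^d = ⋃_{i=1}^d ({0}^{i−1} × R × {0}^{d−i}) ⊆ ℤ^d \ {0} be the axial product recovery set. Then for every finite alphabet Q with |Q| = q and every one-dimensional R-recoverable system X ⊆ Q^ℤ, there exists an R^d-recoverable system Y ⊆ Q^{ℤ^d} on ℤ^d with R_q(Y) = R_q(X) (Y is obtained by stacking: y_{(i₁,...,i_d)} depends only on i_d and runs over independent copies of words of X along the last coordinate). Consequently, the supremum of rates of R^d-recoverable systems over alphabets of size q is at least the supremum of rates of R-recoverable systems over alphabets of size q. -/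

import Mathlib

/-! Stack arbitrary words of `X` along the lines parallel to one axis. A symbol is recovered
from its `R`-neighbours on its own line, and these lie in `R^d`. A `[n]^d` block of the stacked
system is an arbitrary choice of `n^(d-1)` words of `B_n(X)`, one per row, so
`log_q |B_{[n]^d}| / n^d = log_q |B_n| / n` and the rates agree. All rates are at most
`log_q |Q|`; without this bound `sSup` would take its junk value `0`. -/

/-- An `R`-recoverable system on `ℤ`. -/
def IsRecoverable {Q : Type*} (R : Set ℤ) (X : Set (ℤ → Q)) : Prop :=
  ∀ i : ℤ, ∃ f : (ℤ → Q) → Q,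
    (∀ x y : ℤ → Q, (∀ j ∈ R, x (i + j) = y (i + j)) → f x = f y) ∧
    ∀ x ∈ X, f x = x i

/-- `|B_n(X)|` for a one-dimensional system. -/
noncomputable def blockCount {Q : Type*} (X : Set (ℤ → Q)) (n : ℕ) : ℕ :=
  Nat.card ↥((fun x : ℤ → Q => fun i : Fin n => x ((i : ℕ) : ℤ)) '' X)

/-- The rate of a one-dimensional system. -/
noncomputable def rate (q : ℕ) {Q : Type*} (X : Set (ℤ → Q)) : ℝ :=
  Filter.limsup (fun n : ℕ => Real.logb q (blockCount X n) / n) Filter.atTop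

/-- An `S`-recoverable system on `ℤ^d`. -/
def IsRecoverableD {Q : Type*} {d : ℕ} (S : Set (Fin d → ℤ))
    (X : Set ((Fin d → ℤ) → Q)) : Prop :=
  ∀ v : Fin d → ℤ, ∃ f : ((Fin d → ℤ) → Q) → Q,
    (∀ x y : (Fin d → ℤ) → Q, (∀ u ∈ S, x (v + u) = y (v + u)) → f x = f y) ∧
    ∀ x ∈ X, f x = x v

/-- `|B_{[n]^d}(Y)|` for a `d`-dimensional system. -/
noncomputable def blockCountD {Q : Type*} {d : ℕ} (Y : Set ((Fin d → ℤ) → Q)) (n : ℕ) : ℕ :=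
  Nat.card ↥((fun x : (Fin d → ℤ) → Q =>
    fun w : Fin d → Fin n => x (fun i => ((w i : ℕ) : ℤ))) '' Y)

/-- The rate of a `d`-dimensional system. -/
noncomputable def rateD (q : ℕ) {Q : Type*} {d : ℕ} (Y : Set ((Fin d → ℤ) → Q)) : ℝ :=
  Filter.limsup (fun n : ℕ => Real.logb q (blockCountD Y n) / ((n ^ d : ℕ) : ℝ)) Filter.atTop

/-- The axial-product recovery set `R^d = ⋃_i {0}^{i−1} × R × {0}^{d−i}`. -/
def axialSet (R : Set ℤ) (d : ℕ) : Set (Fin d → ℤ) :=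
  {u | ∃ i : Fin d, u i ∈ R ∧ ∀ j : Fin d, j ≠ i → u j = 0}

-- The paper stacks along the last coordinate; the first one is more convenient with `Fin.cons`.
def stacked {Q : Type*} {m : ℕ} (X : Set (ℤ → Q)) : Set ((Fin (m + 1) → ℤ) → Q) :=
  {y | ∀ a : Fin m → ℤ, (fun t : ℤ => y (Fin.cons t a)) ∈ X}

theorem IsRecoverable.stacked {Q : Type*} {R : Set ℤ} {m : ℕ} {X : Set (ℤ → Q)}
    (hX : IsRecoverable R X) : IsRecoverableD (axialSet R (m + 1)) (stacked X) := by
  intro v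
  obtain ⟨f, hf_local, hf_recovers⟩ := hX (v 0)
  refine ⟨fun y => f (fun t => y (Fin.cons t (Fin.tail v))), fun x y hxy => hf_local _ _ ?_,
    fun y hy => by simpa [Fin.cons_self_tail] using hf_recovers _ (hy (Fin.tail v))⟩
  intro j hj
  have h_axial : Fin.cons j 0 ∈ axialSet R (m + 1) :=
    ⟨0, hj, Fin.cases (fun h => (h rfl).elim) (fun _ _ => rfl)⟩
  have h_shift : v + Fin.cons j 0 = Fin.cons (v 0 + j) (Fin.tail v) := by
    ext k
    cases k using Fin.cases <;> simp [Fin.tail]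
  simpa [h_shift] using hxy _ h_axial

section Counting

variable {Q : Type*} {m n : ℕ}

-- The restriction maps inside `blockCount` and `blockCountD`.
def window (n : ℕ) (x : ℤ → Q) : Fin n → Q := fun i => x ((i : ℕ) : ℤ)

def windowD {d : ℕ} (n : ℕ) (y : (Fin d → ℤ) → Q) : (Fin d → Fin n) → Q :=
  fun w => y (fun i => ((w i : ℕ) : ℤ))

def blockRows (b : (Fin (m + 1) → Fin n) → Q) : (Fin m → Fin n) → Fin n → Q :=
  fun w t => b (Fin.cons t w)

theorem blockRows_injective : Function.Injective (blockRows (Q := Q) (m := m) (n := n)) := by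
  intro b b' h
  funext w
  simpa [blockRows, Fin.cons_self_tail] using congrFun (congrFun h (Fin.tail w)) (w 0)

theorem blockRows_windowD (y : (Fin (m + 1) → ℤ) → Q) (w : Fin m → Fin n) :
    blockRows (windowD n y) w =
      window n (fun t => y (Fin.cons t (fun i => ((w i : ℕ) : ℤ)))) := by
  funext t
  simp only [blockRows, windowD, window]
  congr 1
  ext k
  cases k using Fin.cases <;> simp

theorem blockRows_image_windowD_stacked [NeZero n] (X : Set (ℤ → Q)) :
    blockRows '' (windowD n '' stacked (m := m) X) = Set.univ.pi fun _ => window n '' X := by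
  ext G
  simp only [Set.mem_image, Set.mem_univ_pi]
  constructor
  · rintro ⟨_, ⟨y, hy, rfl⟩, rfl⟩ w
    exact ⟨_, hy _, (blockRows_windowD y w).symm⟩
  · intro hG
    choose x hxX hxG using hG
    -- Any left inverse of `Fin n → ℤ` works: rows off the window repeat some chosen word.
    let π : (Fin m → ℤ) → Fin m → Fin n := fun a i => Fin.ofNat n (a i).toNat
    refine ⟨_, ⟨fun v => x (π (Fin.tail v)) (v 0), fun a => ?_, rfl⟩, ?_⟩
    · simpa [Fin.tail_cons] using hxX (π a)
    · funext w
      rw [blockRows_windowD, ← hxG w]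
      simp [π, Fin.tail_cons]

theorem blockCountD_stacked (X : Set (ℤ → Q)) (hn : 0 < n) :
    blockCountD (stacked (m := m) X) n = blockCount X n ^ n ^ m := by
  have : NeZero n := ⟨hn.ne'⟩
  calc blockCountD (stacked (m := m) X) n
      = Nat.card (blockRows '' (windowD n '' stacked (m := m) X)) :=
        (Nat.card_image_of_injective blockRows_injective _).symm
    _ = Nat.card ((Fin m → Fin n) → window n '' X) := by
        rw [blockRows_image_windowD_stacked]
        exact Nat.card_congr (Equiv.Set.univPi _)
    _ = blockCount X n ^ n ^ m := by
        rw [Nat.card_fun, Nat.card_fun, Nat.card_fin, Nat.card_fin]; rfl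

theorem rateD_stacked (q : ℕ) (X : Set (ℤ → Q)) :
    rateD q (stacked (m := m) X) = rate q X := by
  refine Filter.limsup_congr ?_
  filter_upwards [Filter.eventually_gt_atTop 0] with n hn
  rw [blockCountD_stacked X hn]
  push_cast
  rw [Real.logb_pow, Nat.cast_pow, pow_succ]
  field_simp

end Counting

theorem Real.logb_natCast_nonneg (q k : ℕ) : 0 ≤ Real.logb q k :=
  div_nonneg (Real.log_natCast_nonneg k) (Real.log_natCast_nonneg q)

theorem blockCountD_le_card_pow {Q : Type*} [Finite Q] {d : ℕ} (Y : Set ((Fin d → ℤ) → Q))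
    (n : ℕ) : blockCountD Y n ≤ Nat.card Q ^ n ^ d :=
  calc blockCountD Y n ≤ Nat.card ((Fin d → Fin n) → Q) :=
        Nat.card_le_card_of_injective Subtype.val Subtype.val_injective
    _ = Nat.card Q ^ n ^ d := by simp [Nat.card_fun]

theorem rateD_le_logb_card {Q : Type*} [Finite Q] {q : ℕ} (hq : 1 < q) {d : ℕ}
    (Y : Set ((Fin d → ℤ) → Q)) : rateD q Y ≤ Real.logb q (Nat.card Q) := by
  have h_nonneg : ∀ n : ℕ, 0 ≤ Real.logb q (blockCountD Y n) / ((n ^ d : ℕ) : ℝ) :=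
    fun n => div_nonneg (Real.logb_natCast_nonneg q _) (Nat.cast_nonneg _)
  refine Filter.limsup_le_of_le (Filter.isCoboundedUnder_le_of_le _ h_nonneg) ?_
  filter_upwards [Filter.eventually_gt_atTop 0] with n hn
  rw [div_le_iff₀ (by positivity)]
  rcases (blockCountD Y n).eq_zero_or_pos with h_zero | h_pos
  · simpa [h_zero] using mul_nonneg (Real.logb_natCast_nonneg q (Nat.card Q)) (by positivity)
  · calc Real.logb q (blockCountD Y n) ≤ Real.logb q ((Nat.card Q ^ n ^ d : ℕ) : ℝ) :=
          Real.logb_le_logb_of_le (by exact_mod_cast hq) (by exact_mod_cast h_pos)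
            (by exact_mod_cast blockCountD_le_card_pow Y n)
      _ = Real.logb q (Nat.card Q) * ((n ^ d : ℕ) : ℝ) := by
          rw [Nat.cast_pow, Real.logb_pow]
          ring

theorem stmt12_general (R : Set ℤ)
    (d : ℕ) (hd : 2 ≤ d) (q : ℕ) (hq : 2 ≤ q)
    (Q : Type*) [Fintype Q]
    (X : Set (ℤ → Q)) (hX : IsRecoverable R X) :
    (∃ Y : Set ((Fin d → ℤ) → Q), IsRecoverableD (axialSet R d) Y ∧ rateD q Y = rate q X) ∧
    sSup {x : ℝ | ∃ X' : Set (ℤ → Q), IsRecoverable R X' ∧ rate q X' = x} ≤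
      sSup {x : ℝ | ∃ Y : Set ((Fin d → ℤ) → Q),
        IsRecoverableD (axialSet R d) Y ∧ rateD q Y = x} := by
  obtain ⟨m, rfl⟩ : ∃ m, d = m + 1 := ⟨d - 1, by omega⟩
  have h_stack : ∀ X' : Set (ℤ → Q), IsRecoverable R X' →
      ∃ Y : Set ((Fin (m + 1) → ℤ) → Q),
        IsRecoverableD (axialSet R (m + 1)) Y ∧ rateD q Y = rate q X' :=
    fun X' hX' => ⟨stacked X', hX'.stacked, rateD_stacked q X'⟩
  refine ⟨h_stack X hX, csSup_le_csSup ?_ ⟨_, X, hX, rfl⟩ ?_⟩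
  · exact ⟨_, by rintro _ ⟨Y, -, rfl⟩; exact rateD_le_logb_card hq Y⟩
  · rintro _ ⟨X', hX', rfl⟩
    exact h_stack X' hX'

/-- Stacking a one-dimensional `R`-recoverable system along one coordinate of
`ℤ^d` yields an `R^d`-recoverable system of the same rate; consequently the
supremum of rates of `R^d`-systems is at least that of `R`-systems. -/
theorem stmt12 (R : Set ℤ) (hRfin : R.Finite) (hR0 : (0 : ℤ) ∉ R)
    (d : ℕ) (hd : 2 ≤ d) (q : ℕ) (hq : 2 ≤ q)
    (Q : Type*) [Fintype Q] (hQ : Fintype.card Q = q)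
    (X : Set (ℤ → Q)) (hX : IsRecoverable R X) :
    (∃ Y : Set ((Fin d → ℤ) → Q), IsRecoverableD (axialSet R d) Y ∧ rateD q Y = rate q X) ∧
    sSup {x : ℝ | ∃ X' : Set (ℤ → Q), IsRecoverable R X' ∧ rate q X' = x} ≤
      sSup {x : ℝ | ∃ Y : Set ((Fin d → ℤ) → Q),
        IsRecoverableD (axialSet R d) Y ∧ rateD q Y = x} :=
  stmt12_general R d hd q hq Q X hX
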